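/- The dominating number of the almost-refinement system of the Cohen algebra equals cof(ℳ), the cofinality of the meagre ideal on Cantor space, and the bounding number of its σ-version equals add(ℳ). -/

import Mathlib

/-- A relational system `⟨A₋, A, A₊⟩`. -/
structure RelSys : Type 1 where
  Dom : Type
  Cod : Type
  Rel : Dom → Cod → Prop

/-- The dominating number `𝔡(A)` of a relational system. -/
noncomputable def dNum (S : RelSys) : Cardinal :=
  sInf { c | ∃ Y : Set S.Cod, Cardinal.mk Y = c ∧ ∀ x : S.Dom, ∃ y ∈ Y, S.Rel x y }

/-- The bounding number `𝔟(A)` of a relational system. -/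
noncomputable def bNum (S : RelSys) : Cardinal :=
  sInf { c | ∃ X : Set S.Dom, Cardinal.mk X = c ∧ ∀ y : S.Cod, ∃ x ∈ X, ¬ S.Rel x y }

/-- A generalized Galois–Tukey connection from `S` to `T` (`S ≤_T T`). -/
def GT (S T : RelSys) : Prop :=
  ∃ (φm : S.Dom → T.Dom) (φp : T.Cod → S.Cod),
    ∀ a b, T.Rel (φm a) b → S.Rel a (φp b)

/-- Galois–Tukey equivalence. -/
def GTequiv (S T : RelSys) : Prop := GT S T ∧ GT T S

/-- The σ-version `A^σ` of a relational system. -/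
def sigmaSys (S : RelSys) : RelSys :=
  ⟨S.Dom, ℕ → S.Cod, fun a f => ∃ n, S.Rel a (f n)⟩

/-- Sequential composition `A;B` of relational systems. -/
def seqComp (S T : RelSys) : RelSys :=
  ⟨S.Dom × (S.Cod → T.Dom), S.Cod × T.Cod,
   fun p q => S.Rel p.1 q.1 ∧ T.Rel (p.2 q.1) q.2⟩

/-- An antichain in a Boolean algebra: pairwise disjoint nonzero elements. -/
def BAAntichain {α : Type} [BooleanAlgebra α] (A : Set α) : Prop :=
  (∀ a ∈ A, a ≠ ⊥) ∧ ∀ a ∈ A, ∀ b ∈ A, a ≠ b → a ⊓ b = ⊥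

/-- A maximal antichain in a Boolean algebra. -/
def MaxAC {α : Type} [BooleanAlgebra α] (A : Set α) : Prop :=
  BAAntichain A ∧ ∀ b : α, b ≠ ⊥ → ∃ a ∈ A, a ⊓ b ≠ ⊥

/-- The countable chain condition. -/
def CCC (α : Type) [BooleanAlgebra α] : Prop :=
  ∀ A : Set α, BAAntichain A → A.Countable

/-- `C` refines `A` (written `A ≤ C`): every element of `C` is below some element of `A`. -/
def Refines {α : Type} [BooleanAlgebra α] (A C : Set α) : Prop :=
  ∀ c ∈ C, ∃ a ∈ A, c ≤ a

/-- `C` almost refines `A` (written `A ≤* C`). -/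
def AlmostRefines {α : Type} [BooleanAlgebra α] (A C : Set α) : Prop :=
  ∃ F : Finset α, ↑F ⊆ A ∧ Refines ((A \ ↑F) ∪ {F.sup id}) C

/-- The set of maximal antichains of `α`. -/
def PartT (α : Type) [BooleanAlgebra α] : Type := {A : Set α // MaxAC A}

/-- The refinement relational system `Part(α)`. -/
def PartSys (α : Type) [BooleanAlgebra α] : RelSys :=
  ⟨PartT α, PartT α, fun A C => Refines A.1 C.1⟩

/-- The almost-refinement relational system `Part*(α)`. -/
def PartStar (α : Type) [BooleanAlgebra α] : RelSys :=
  ⟨PartT α, PartT α, fun A C => AlmostRefines A.1 C.1⟩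

/-- The eventual domination relational system `(ωω, ≤*, ωω)`. -/
def domSys : RelSys :=
  ⟨ℕ → ℕ, ℕ → ℕ, fun f g => ∀ᶠ n in Filter.atTop, f n ≤ g n⟩

/-- Quotients of Boolean rings are Boolean rings. -/
instance quotBooleanRing (R : Type) [BooleanRing R] (I : Ideal R) :
    BooleanRing (R ⧸ I) :=
  { (inferInstance : CommRing (R ⧸ I)) with
    isIdempotentElem := fun a => by
      obtain ⟨x, rfl⟩ := Ideal.Quotient.mk_surjective a
      unfold IsIdempotentElem
      rw [← map_mul, BooleanRing.mul_self] }

/-- The quotient of a Boolean algebra by an ideal (presented as a ring ideal of the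
associated Boolean ring), again viewed as a Boolean algebra. -/
def quotAlg (α : Type) [BooleanAlgebra α] (I : Ideal (AsBoolRing α)) : Type :=
  AsBoolAlg (AsBoolRing α ⧸ I)

noncomputable instance quotAlgBA (α : Type) [BooleanAlgebra α] (I : Ideal (AsBoolRing α)) :
    BooleanAlgebra (quotAlg α I) :=
  inferInstanceAs (BooleanAlgebra (AsBoolAlg (AsBoolRing α ⧸ I)))

/-- The quotient map from a Boolean algebra to its quotient algebra. -/
def quotCls {α : Type} [BooleanAlgebra α] (I : Ideal (AsBoolRing α)) (a : α) : quotAlg α I :=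
  toBoolAlg (Ideal.Quotient.mk I (toBoolRing a))

/-- The ideal of finite subsets of `ω`, as a ring ideal of `P(ω)`. -/
def finIdeal : Ideal (AsBoolRing (Set ℕ)) where
  carrier := {x | (ofBoolRing x : Set ℕ).Finite}
  zero_mem' := by simp [ofBoolRing_zero, Set.bot_eq_empty]
  add_mem' := by
    intro a b ha hb
    simpa [ofBoolRing_add] using ((ha.union hb).subset (Set.symmDiff_subset_union))
  smul_mem' := by
    intro c x hx
    simpa [smul_eq_mul, ofBoolRing_mul] using hx.subset (by simp [Set.inf_eq_inter])

/-- `P(ω)/fin`. -/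
def PomegaFin : Type := quotAlg (Set ℕ) finIdeal

noncomputable instance : BooleanAlgebra PomegaFin := quotAlgBA _ _

/-- The ideal `Fin` of the product algebra `ωB`: functions with finite support. -/
def finSuppIdeal (B : Type) [BooleanAlgebra B] : Ideal (AsBoolRing (ℕ → B)) where
  carrier := {x | {n | (ofBoolRing x : ℕ → B) n ≠ ⊥}.Finite}
  zero_mem' := by simp [ofBoolRing_zero]
  add_mem' := by
    intro a b ha hb
    refine ((ha.union hb).subset ?_)
    intro n hn
    simp only [ofBoolRing_add, Pi.symmDiff_apply, Set.mem_setOf_eq] at hn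
    by_contra h
    simp only [Set.mem_union, Set.mem_setOf_eq, not_or, ne_eq, not_not] at h
    simp [h.1, h.2] at hn
  smul_mem' := by
    intro c x hx
    refine hx.subset ?_
    intro n hn
    simp only [smul_eq_mul, ofBoolRing_mul, Pi.inf_apply, Set.mem_setOf_eq] at hn
    simp only [Set.mem_setOf_eq]
    intro h
    simp [h] at hn

/-- The reduced power `ωB/Fin` of a Boolean algebra `B`. -/
def redPow (B : Type) [BooleanAlgebra B] : Type := quotAlg (ℕ → B) (finSuppIdeal B)

noncomputable instance (B : Type) [BooleanAlgebra B] : BooleanAlgebra (redPow B) := quotAlgBA _ _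

abbrev Cantor : Type := ℕ → Bool

/-- The basic clopen set `N_s` determined by a finite binary sequence `s`. -/
def cyl (s : List Bool) : Set Cantor := {f | ∀ i, i < s.length → f i = s.getD i false}

lemma cyl_measurable (s : List Bool) : MeasurableSet (cyl s) := by
  have h : cyl s = ⋂ i ∈ Finset.range s.length, (fun f : Cantor => f i) ⁻¹' {s.getD i false} := by
    ext f
    simp [cyl]
  rw [h]
  exact Finset.measurableSet_biInter _ fun i _ => (measurable_pi_apply i) (by trivial)

/-- The σ-ideal of meagre subsets of Cantor space. -/
def MeagreSets : Set (Set Cantor) := {s | IsMeagre s}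

/-- `cof(ℳ)`: the cofinality of the meagre ideal of Cantor space. -/
noncomputable def cofM : Cardinal :=
  sInf { c | ∃ F : Set (Set Cantor), (∀ s ∈ F, IsMeagre s) ∧
    (∀ s : Set Cantor, IsMeagre s → ∃ t ∈ F, s ⊆ t) ∧ Cardinal.mk F = c }

/-- `add(ℳ)`: the additivity of the meagre ideal of Cantor space. -/
noncomputable def addM : Cardinal :=
  sInf { c | ∃ F : Set (Set Cantor), (∀ s ∈ F, IsMeagre s) ∧
    ¬ IsMeagre (⋃₀ F) ∧ Cardinal.mk F = c }



/-- The Borel subsets of Cantor space, as a Boolean algebra of sets. -/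
abbrev BorelSets : Type := {s : Set Cantor // MeasurableSet s}

lemma IsMeagre.union' {X : Type} [TopologicalSpace X] {s t : Set X}
    (hs : IsMeagre s) (ht : IsMeagre t) : IsMeagre (s ∪ t) := by
  rw [IsMeagre, Set.compl_union]; exact Filter.inter_mem hs ht

/-- The ideal of meagre Borel sets, as a ring ideal of the Boolean ring of Borel sets. -/
noncomputable def meagreIdeal : Ideal (AsBoolRing BorelSets) where
  carrier := {x | IsMeagre ((ofBoolRing x : BorelSets) : Set Cantor)}
  zero_mem' := by
    show IsMeagre ((ofBoolRing (0 : AsBoolRing BorelSets) : BorelSets) : Set Cantor)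
    rw [ofBoolRing_zero]
    simpa using IsMeagre.empty
  add_mem' := by
    intro a b ha hb
    show IsMeagre ((ofBoolRing (a + b) : BorelSets) : Set Cantor)
    rw [ofBoolRing_add]
    refine (ha.union' hb).mono ?_
    have h : ((symmDiff (ofBoolRing a) (ofBoolRing b) : BorelSets) : Set Cantor)
        = symmDiff ((ofBoolRing a : BorelSets) : Set Cantor) ((ofBoolRing b : BorelSets) : Set Cantor) := rfl
    rw [h]
    exact symmDiff_le_sup
  smul_mem' := by
    intro c x hx
    show IsMeagre ((ofBoolRing (c • x) : BorelSets) : Set Cantor)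
    rw [smul_eq_mul, ofBoolRing_mul]
    refine hx.mono ?_
    have : ((ofBoolRing c ⊓ ofBoolRing x : BorelSets) : Set Cantor)
        = ((ofBoolRing c : BorelSets) : Set Cantor) ∩ (ofBoolRing x : BorelSets) := rfl
    rw [this]
    exact Set.inter_subset_right

/-- The Cohen algebra `ℂ_ω = Borel(2^ω)/meagre`. -/
def CohenAlg : Type := quotAlg BorelSets meagreIdeal

noncomputable instance : BooleanAlgebra CohenAlg := quotAlgBA _ _

/-- The equivalence class `[X]` of a Borel set in the Cohen algebra. -/
noncomputable def cohenCls (X : BorelSets) : CohenAlg := quotCls meagreIdeal X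

/-- The class `[N_s]` of a basic clopen set in the Cohen algebra. -/
noncomputable def cylC (s : List Bool) : CohenAlg := cohenCls ⟨cyl s, cyl_measurable s⟩

/-
Every meagre subset of Cantor space is contained in the set `matchMeagre m x` of points that agree
with a pattern `x` on only finitely many blocks `[m n, m (n+1))`. Such a pair `(m, x)` defines
maximal antichains of cylinder classes: `blockAntichain m x k` cuts each point at its first block
`≥ k` matching `x`, and `pagedAntichain m x` does the same separately on each clopen page `1ᵏ0`.

Conversely, a maximal antichain `A`, represented by open sets with dense union, is captured block by
block by a pattern `(mJ, y)`. If `matchMeagre mJ y ⊆ matchMeagre m x`, almost every `m`-block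
contains an `mJ`-block on which `x = y`, so `blockAntichain m x N` refines `A`. If instead
`pagedAntichain m x ≤* C`, then `matchMeagre m x` lies in a meagre set that depends on `C` alone,
because the pages absorb the finitely many exceptional elements. These facts give Galois–Tukey
connections `ℳ ≤ Part*`, `ℳ ≤ (Part*)^σ` and `(Part*)^σ ≤ ℳ`, and `𝔡(Part*) ≤ 𝔡((Part*)^σ) · ℵ₀`.
-/

open Set Filter Topology PiNat Cardinal
open scoped symmDiff

section RelationalSystems

variable {S T : RelSys}

lemma dNum_le_mk {Y : Set S.Cod} (hY : ∀ x, ∃ y ∈ Y, S.Rel x y) : dNum S ≤ #Y :=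
  csInf_le' ⟨Y, rfl, hY⟩

lemma bNum_le_mk {X : Set S.Dom} (hX : ∀ y, ∃ x ∈ X, ¬ S.Rel x y) : bNum S ≤ #X :=
  csInf_le' ⟨X, rfl, hX⟩

lemma exists_mk_eq_dNum (hS : ∀ x, ∃ y, S.Rel x y) :
    ∃ Y : Set S.Cod, #Y = dNum S ∧ ∀ x, ∃ y ∈ Y, S.Rel x y :=
  csInf_mem (s := {c | ∃ Y : Set S.Cod, #Y = c ∧ ∀ x, ∃ y ∈ Y, S.Rel x y})
    ⟨_, univ, rfl, fun x => (hS x).imp fun y h => ⟨mem_univ y, h⟩⟩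

lemma exists_mk_eq_bNum (hS : ∀ y, ∃ x, ¬ S.Rel x y) :
    ∃ X : Set S.Dom, #X = bNum S ∧ ∀ y, ∃ x ∈ X, ¬ S.Rel x y :=
  csInf_mem (s := {c | ∃ X : Set S.Dom, #X = c ∧ ∀ y, ∃ x ∈ X, ¬ S.Rel x y})
    ⟨_, univ, rfl, fun y => (hS y).imp fun x h => ⟨mem_univ x, h⟩⟩

namespace GT

lemma dNum_le (h : GT S T) (hT : ∀ x, ∃ y, T.Rel x y) : dNum S ≤ dNum T := by
  obtain ⟨φm, φp, hφ⟩ := h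
  obtain ⟨Y, hYc, hY⟩ := exists_mk_eq_dNum hT
  calc dNum S ≤ #(φp '' Y) := dNum_le_mk fun x => by
        obtain ⟨y, hy, hxy⟩ := hY (φm x)
        exact ⟨φp y, mem_image_of_mem φp hy, hφ x y hxy⟩
    _ ≤ #Y := mk_image_le
    _ = dNum T := hYc

lemma bNum_le (h : GT S T) (hS : ∀ y, ∃ x, ¬ S.Rel x y) : bNum T ≤ bNum S := by
  obtain ⟨φm, φp, hφ⟩ := h
  obtain ⟨X, hXc, hX⟩ := exists_mk_eq_bNum hS
  calc bNum T ≤ #(φm '' X) := bNum_le_mk fun y => by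
        obtain ⟨x, hx, hxy⟩ := hX (φp y)
        exact ⟨φm x, mem_image_of_mem φm hx, fun h => hxy (hφ x y h)⟩
    _ ≤ #X := mk_image_le
    _ = bNum S := hXc

lemma unbounded (h : GT S T) (hS : ∀ y, ∃ x, ¬ S.Rel x y) : ∀ y, ∃ x, ¬ T.Rel x y := by
  obtain ⟨φm, φp, hφ⟩ := h
  intro y
  obtain ⟨x, hx⟩ := hS (φp y)
  exact ⟨φm x, fun h => hx (hφ x y h)⟩

end GT

lemma dNum_le_dNum_sigmaSys_mul_aleph0 (hS : ∀ x, ∃ y, S.Rel x y) :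
    dNum S ≤ dNum (sigmaSys S) * ℵ₀ := by
  obtain ⟨Y, hYc, hY⟩ := exists_mk_eq_dNum (S := sigmaSys S) fun x =>
    let ⟨y, h⟩ := hS x; ⟨fun _ => y, 0, h⟩
  calc dNum S ≤ #(range fun p : Y × ℕ => p.1.1 p.2) := dNum_le_mk fun x => by
        obtain ⟨f, hf, n, hn⟩ := hY x
        exact ⟨f n, ⟨(⟨f, hf⟩, n), rfl⟩, hn⟩
    _ ≤ #(Y × ℕ) := mk_range_le
    _ = dNum (sigmaSys S) * ℵ₀ := by simp [hYc]

end RelationalSystems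

lemma IsOpen.eq_empty_of_isMeagre {X : Type*} [TopologicalSpace X] [BaireSpace X] {U : Set X}
    (hU : IsOpen U) (h : IsMeagre U) : U = ∅ :=
  not_nonempty_iff_eq_empty.1 fun hne => not_isMeagre_of_isOpen hU hne h

lemma Monotone.eq_of_mem_Ico {m : ℕ → ℕ} (hm : Monotone m) {i n n' : ℕ}
    (h : i ∈ Ico (m n) (m (n + 1))) (h' : i ∈ Ico (m n') (m (n' + 1))) : n = n' := by
  by_contra hne
  rcases lt_or_gt_of_ne hne with hlt | hlt
  · have := hm (Nat.succ_le_of_lt hlt); exact absurd (h.2.trans_le this) (not_lt.2 h'.1)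
  · have := hm (Nat.succ_le_of_lt hlt); exact absurd (h'.2.trans_le this) (not_lt.2 h.1)

lemma StrictMono.exists_mem_Ico {m : ℕ → ℕ} (hm : StrictMono m) (h0 : m 0 = 0) (i : ℕ) :
    ∃ n, i ∈ Ico (m n) (m (n + 1)) := by
  classical
  have hex : ∃ n, i < m (n + 1) := ⟨i, Nat.lt_succ_self i |>.trans_le hm.le_apply⟩
  refine ⟨Nat.find hex, ?_, Nat.find_spec hex⟩
  cases h : Nat.find hex with
  | zero => simp [h0]
  | succ k => exact not_lt.1 (Nat.find_min hex (h ▸ k.lt_succ_self))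

namespace Cantor

lemma isClosed_cylinder (z : Cantor) (n : ℕ) : IsClosed (cylinder z n) :=
  cylinder_eq_pi z n ▸ isClosed_set_pi fun _ _ => isClosed_discrete _

lemma exists_cylinder_subset {U : Set Cantor} (hU : IsOpen U) {z : Cantor} (hz : z ∈ U) :
    ∃ n, cylinder z n ⊆ U := by
  obtain ⟨_, ⟨w, n, rfl⟩, hzw, hwU⟩ :=
    (isTopologicalBasis_cylinders fun _ => Bool).exists_subset_of_mem_open hz hU
  exact ⟨n, mem_cylinder_iff_eq.1 hzw ▸ hwU⟩

lemma isOpen_of_forall_cylinder_subset {s : Set Cantor} (h : ∀ z ∈ s, ∃ n, cylinder z n ⊆ s) :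
    IsOpen s :=
  isOpen_iff_forall_mem_open.2 fun z hz =>
    let ⟨n, hn⟩ := h z hz; ⟨_, hn, isOpen_cylinder _ z n, self_mem_cylinder z n⟩

def overwrite (σ : Cantor) (L : ℕ) (τ : Cantor) : Cantor := fun i => if i < L then σ i else τ i

lemma overwrite_mem_cylinder (σ : Cantor) (L : ℕ) (τ : Cantor) : overwrite σ L τ ∈ cylinder σ L :=
  fun _ hi => if_pos hi

lemma overwrite_apply_of_le {σ τ : Cantor} {L i : ℕ} (h : L ≤ i) : overwrite σ L τ i = τ i :=
  if_neg (not_lt.2 h)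

/-- A chopped real is a pair `(m, x)` with `m` strictly increasing. It reads the pattern `x` on the
blocks `[m n, m (n+1))`, and `matchMeagre m x` is the meagre set `M(m, x)` it codes. -/
def matchAt (m : ℕ → ℕ) (x z : Cantor) (n : ℕ) : Prop :=
  ∀ i, m n ≤ i → i < m (n + 1) → z i = x i

def matchMeagre (m : ℕ → ℕ) (x : Cantor) : Set Cantor :=
  {z | ∀ᶠ n in atTop, ¬ matchAt m x z n}

lemma matchAt_overwrite (m : ℕ → ℕ) (x σ : Cantor) (n : ℕ) :
    matchAt m x (overwrite σ (m n) x) n :=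
  fun _ h _ => overwrite_apply_of_le h

lemma isMeagre_matchMeagre {m : ℕ → ℕ} (hm : StrictMono m) (x : Cantor) :
    IsMeagre (matchMeagre m x) := by
  have : matchMeagre m x = ⋃ K, {z | ∃ n ≥ K, matchAt m x z n}ᶜ := by
    ext z; simp [matchMeagre, eventually_atTop]
  rw [this]
  refine isMeagre_iUnion fun K => ?_
  rw [IsMeagre, compl_compl]
  refine residual_of_dense_open ?_ (dense_iff_inter_open.2 fun V hV ⟨v, hv⟩ => ?_)
  · refine isOpen_of_forall_cylinder_subset fun z ⟨n, hKn, hn⟩ => ⟨m (n + 1), fun y hy => ?_⟩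
    exact ⟨n, hKn, fun i h1 h2 => (hy i h2).trans (hn i h1 h2)⟩
  · obtain ⟨L, hL⟩ := exists_cylinder_subset hV hv
    let n := max K L
    refine ⟨overwrite v (m n) x, hL ?_, n, le_max_left K L, matchAt_overwrite m x v n⟩
    exact cylinder_anti v ((le_max_right K L).trans hm.le_apply) (overwrite_mem_cylinder v _ x)

lemma isMeagre_singleton (z : Cantor) : IsMeagre ({z} : Set Cantor) := by
  refine (isMeagre_matchMeagre strictMono_id fun i => !z i).mono ?_
  rintro _ rfl
  exact Eventually.of_forall fun n hn => by simpa using hn n le_rfl n.lt_succ_self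

lemma not_isMeagre_univ : ¬ IsMeagre (univ : Set Cantor) :=
  not_isMeagre_of_isOpen isOpen_univ univ_nonempty

lemma exists_block_capturing {ι : Type*} {U : ι → Set Cantor} (hU : ∀ j, IsOpen (U j))
    (hd : Dense (⋃ j, U j)) (L : ℕ) :
    ∃ L' > L, ∃ τ : Cantor, ∀ z : Cantor, (∀ i, L ≤ i → i < L' → z i = τ i) →
      ∃ j, cylinder z L' ⊆ U j := by
  classical
  -- extend the pattern once for each of the finitely many prefixes below `L`, using density
  suffices key : ∀ s : Finset (Fin L → Bool), ∃ L' > L, ∃ τ : Cantor, ∀ z : Cantor,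
      (fun i : Fin L => z i) ∈ s → (∀ i, L ≤ i → i < L' → z i = τ i) →
        ∃ j, cylinder z L' ⊆ U j by
    obtain ⟨L', hL', τ, hτ⟩ := key Finset.univ
    exact ⟨L', hL', τ, fun z => hτ z (Finset.mem_univ _)⟩
  intro s
  induction s using Finset.induction_on with
  | empty =>
    exact ⟨L + 1, L.lt_succ_self, fun _ => false, fun z hz => absurd hz (Finset.notMem_empty _)⟩
  | insert σ s _ ih =>
    obtain ⟨L', hL', τ, hτ⟩ := ih
    let g : Cantor := fun i => if h : i < L then σ ⟨i, h⟩ else τ i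
    obtain ⟨w, hwg, hwU⟩ :=
      hd.inter_open_nonempty _ (isOpen_cylinder _ g L') ⟨g, self_mem_cylinder g L'⟩
    obtain ⟨j, hwj⟩ := mem_iUnion.1 hwU
    obtain ⟨N, hN⟩ := exists_cylinder_subset (hU j) hwj
    refine ⟨max N L', hL'.trans_le (le_max_right _ _), w, fun z hz hzw => ?_⟩
    rcases Finset.mem_insert.1 hz with rfl | hz
    · have hzw' : z ∈ cylinder w (max N L') := fun i hi => by
        by_cases hiL : i < L
        · rw [hwg i (hiL.trans hL')]; simp [g, hiL]
        · exact hzw i (not_lt.1 hiL) hi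
      exact ⟨j, mem_cylinder_iff_eq.1 hzw' ▸ (cylinder_anti w (le_max_left _ _)).trans hN⟩
    · obtain ⟨j, hj⟩ := hτ z hz fun i hLi hi => by
        rw [hzw i hLi (hi.trans_le (le_max_right _ _)), hwg i hi]; simp [g, not_lt.2 hLi]
      exact ⟨j, (cylinder_anti z (le_max_right _ _)).trans hj⟩

lemma exists_pattern_capturing {ι : Type*} {U : ℕ → ι → Set Cantor} (hU : ∀ n j, IsOpen (U n j))
    (hd : ∀ n, Dense (⋃ j, U n j)) :
    ∃ (m : ℕ → ℕ) (x : Cantor), StrictMono m ∧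
      ∀ n z, matchAt m x z n → ∃ j, cylinder z (m (n + 1)) ⊆ U n j := by
  choose L' hL' τ hτ using fun n L => exists_block_capturing (hU n) (hd n) L
  let m : ℕ → ℕ := fun n => Nat.rec 0 (fun n L => L' n L) n
  have hm : StrictMono m := strictMono_nat_of_lt_succ fun n => hL' n (m n)
  choose blk hblk using hm.exists_mem_Ico rfl
  refine ⟨m, fun i => τ (blk i) (m (blk i)) i, hm, fun n z hz => hτ n (m n) z fun i h1 h2 => ?_⟩
  rw [hz i h1 h2, ← hm.monotone.eq_of_mem_Ico (hblk i) ⟨h1, h2⟩]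

theorem exists_subset_matchMeagre {M : Set Cantor} (hM : IsMeagre M) :
    ∃ (m : ℕ → ℕ) (x : Cantor), StrictMono m ∧ M ⊆ matchMeagre m x := by
  obtain ⟨t, htM, htG, htd⟩ := mem_residual.1 hM
  obtain ⟨f, hfo, rfl⟩ := htG.eq_iInter_nat
  obtain ⟨m, x, hm, hcap⟩ :=
    exists_pattern_capturing (U := fun n (_ : Unit) => ⋂ k ∈ Finset.range (n + 1), f k)
      (fun n _ => isOpen_biInter_finset fun k _ => hfo k)
      (fun n => htd.mono fun z hz => mem_iUnion.2 ⟨(), mem_iInter₂.2 fun k _ => mem_iInter.1 hz k⟩)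
  refine ⟨m, x, hm, fun z hzM => by_contra fun hz => htM (mem_iInter.2 fun k => ?_) hzM⟩
  obtain ⟨n, hkn, hn⟩ := frequently_atTop.1 (not_eventually.1 hz) k
  obtain ⟨-, hsub⟩ := hcap n z (not_not.1 hn)
  exact mem_iInter₂.1 (hsub (self_mem_cylinder z _)) k (Finset.mem_range.2 (Nat.lt_succ_of_le hkn))

lemma exists_mem_Ico_superset {m : ℕ → ℕ} (hm : StrictMono m) {G : Set ℕ}
    (hgap : ∀ n ∈ G, n + 1 ∉ G) {a b : ℕ} (hab : a < b)
    (hcov : ∀ i, a ≤ i → i < b → ∃ n ∈ G, i ∈ Ico (m n) (m (n + 1))) :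
    ∃ n ∈ G, m n ≤ a ∧ b ≤ m (n + 1) := by
  obtain ⟨n, hn, h1, h2⟩ := hcov a le_rfl hab
  refine ⟨n, hn, h1, not_lt.1 fun hb => ?_⟩
  obtain ⟨n', hn', hmem⟩ := hcov (m (n + 1)) h2.le hb
  have : n + 1 = n' := hm.monotone.eq_of_mem_Ico ⟨le_rfl, hm (Nat.lt_add_one _)⟩ hmem
  exact hgap n hn (this ▸ hn')

lemma eventually_engulf {mI mJ : ℕ → ℕ} {x y : Cantor} (hI : StrictMono mI) (hJ : StrictMono mJ)
    (h : matchMeagre mJ y ⊆ matchMeagre mI x) :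
    ∀ᶠ n in atTop, ∃ j, mI n ≤ mJ j ∧ mJ (j + 1) ≤ mI (n + 1) ∧
      ∀ i, mJ j ≤ i → i < mJ (j + 1) → x i = y i := by
  classical
  by_contra hbad
  obtain ⟨φ, hφ, hφbad⟩ := extraction_of_frequently_atTop (not_eventually.1 hbad)
  -- `z` copies `x` on a set `G` of bad blocks, no two adjacent, and contradicts `y` elsewhere.
  -- A block where `z` matches `y` then lies inside one block of `G`, whose badness forbids this.
  let G := range fun k => φ (2 * k)
  have hgap : ∀ n ∈ G, n + 1 ∉ G := by
    rintro _ ⟨k, rfl⟩ ⟨k', hk'⟩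
    simp only at hk'
    rcases le_or_gt k' k with hle | hlt
    · have := hφ.monotone (Nat.mul_le_mul_left 2 hle); omega
    · have := hφ.add_le_nat 2 (2 * k)
      have := hφ.monotone (show 2 + 2 * k ≤ 2 * k' by omega)
      omega
  let z : Cantor := fun i => if ∃ n ∈ G, i ∈ Ico (mI n) (mI (n + 1)) then x i else !y i
  have hzx : z ∉ matchMeagre mI x := fun hz => hz.exists_forall_of_atTop.elim fun N hN =>
    hN (φ (2 * N)) (hφ.le_apply.trans' (by omega)) fun i h1 h2 =>
      if_pos ⟨_, ⟨N, rfl⟩, h1, h2⟩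
  refine hzx (h (Eventually.of_forall fun j hj => ?_))
  by_cases hcov : ∀ i, mJ j ≤ i → i < mJ (j + 1) → ∃ n ∈ G, i ∈ Ico (mI n) (mI (n + 1))
  · obtain ⟨n, ⟨k, rfl⟩, h1, h2⟩ :=
      exists_mem_Ico_superset hI hgap (hJ (Nat.lt_add_one j)) hcov
    refine hφbad (2 * k) ⟨j, h1, h2, fun i hi1 hi2 => ?_⟩
    have : (if ∃ n ∈ G, i ∈ Ico (mI n) (mI (n + 1)) then x i else !y i) = y i := hj i hi1 hi2
    rwa [if_pos (hcov i hi1 hi2)] at this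
  · push Not at hcov
    obtain ⟨i, hi1, hi2, hi⟩ := hcov
    have : (if ∃ n ∈ G, i ∈ Ico (mI n) (mI (n + 1)) then x i else !y i) = y i := hj i hi1 hi2
    rw [if_neg fun ⟨n, hn, hin⟩ => hi n hn hin] at this
    exact Bool.not_ne_self (y i) this

def IsFirstMatch (m : ℕ → ℕ) (x : Cantor) (k : ℕ) (w : Cantor) (n : ℕ) : Prop :=
  k ≤ n ∧ matchAt m x w n ∧ ∀ j, k ≤ j → j < n → ¬ matchAt m x w j

variable {m : ℕ → ℕ} {x : Cantor}

lemma IsFirstMatch.le_of_mem_cylinder (hm : Monotone m) {k n n' : ℕ} {w w' z : Cantor}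
    (h : IsFirstMatch m x k w n) (h' : IsFirstMatch m x k w' n')
    (hz : z ∈ cylinder w (m (n + 1))) (hz' : z ∈ cylinder w' (m (n' + 1))) : n ≤ n' := by
  by_contra! hlt
  refine h.2.2 n' h'.1 hlt fun i h1 h2 => ?_
  rw [← hz i (h2.trans_le (hm (by omega))), hz' i h2]
  exact h'.2.1 i h1 h2

lemma IsFirstMatch.eq_of_nonempty (hm : Monotone m) {k n n' : ℕ} {w w' : Cantor}
    (h : IsFirstMatch m x k w n) (h' : IsFirstMatch m x k w' n')
    (hne : (cylinder w (m (n + 1)) ∩ cylinder w' (m (n' + 1))).Nonempty) : n = n' :=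
  let ⟨_, hz, hz'⟩ := hne
  le_antisymm (h.le_of_mem_cylinder hm h' hz hz') (h'.le_of_mem_cylinder hm h hz' hz)

lemma exists_isFirstMatch_mem_cylinder (hm : StrictMono m) (x z : Cantor) (N k : ℕ) :
    ∃ w ∈ cylinder z N, ∃ n, IsFirstMatch m x k w n := by
  classical
  have hex : ∃ n, k ≤ n ∧ matchAt m x (overwrite z N x) n :=
    ⟨max k N, le_max_left k N, fun i h1 _ =>
      overwrite_apply_of_le (((le_max_right k N).trans hm.le_apply).trans h1)⟩
  exact ⟨_, overwrite_mem_cylinder z N x, Nat.find hex, (Nat.find_spec hex).1,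
    (Nat.find_spec hex).2, fun j hkj hj hmj => Nat.find_min hex hj ⟨hkj, hmj⟩⟩

def pageHead (k : ℕ) : Cantor := fun i => decide (i < k)

def page (k : ℕ) : Set Cantor := cylinder (pageHead k) (k + 1)

def setPage (k : ℕ) (z : Cantor) : Cantor := overwrite (pageHead k) (k + 1) z

lemma eq_of_mem_page {k k' : ℕ} {w w' : Cantor} (hw : w ∈ page k) (hw' : w' ∈ page k')
    (h : w (min k k') = w' (min k k')) : k = k' := by
  rcases lt_trichotomy k k' with hlt | rfl | hlt
  · rw [min_eq_left hlt.le, hw k k.lt_succ_self, hw' k (by omega)] at h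
    simp [pageHead, hlt] at h
  · rfl
  · rw [min_eq_right hlt.le, hw k' (by omega), hw' k' k'.lt_succ_self] at h
    simp [pageHead, hlt] at h

lemma exists_mem_page {z : Cantor} (hz : z ≠ fun _ => true) : ∃ k, z ∈ page k := by
  classical
  have hex : ∃ k, z k = false := by
    by_contra! h
    exact hz (funext fun i => by simpa using h i)
  refine ⟨Nat.find hex, fun i hi => ?_⟩
  rcases Nat.lt_succ_iff_lt_or_eq.1 hi with hi | rfl
  · simpa [pageHead, hi] using Nat.find_min hex hi
  · simpa [pageHead] using Nat.find_spec hex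

lemma setPage_mem_page (k : ℕ) (z : Cantor) : setPage k z ∈ page k :=
  overwrite_mem_cylinder _ _ _

lemma setPage_apply_of_lt {k i : ℕ} (h : k < i) (z : Cantor) : setPage k z i = z i :=
  overwrite_apply_of_le h

lemma continuous_setPage (k : ℕ) : Continuous (setPage k) :=
  continuous_pi fun i => by
    by_cases h : i < k + 1
    · simpa [setPage, overwrite, h] using continuous_const
    · simpa [setPage, overwrite, h] using continuous_apply i

lemma isOpenMap_setPage (k : ℕ) : IsOpenMap (setPage k) := by
  rw [(isTopologicalBasis_cylinders fun _ => Bool).isOpenMap_iff]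
  rintro _ ⟨z, L, rfl⟩
  convert isOpen_cylinder _ (setPage k z) (max L (k + 1))
  ext y
  constructor
  · rintro ⟨z', hz', rfl⟩ i hi
    by_cases h : i < k + 1
    · simp [setPage, overwrite, h]
    · simp [setPage, overwrite, h, hz' i (by omega)]
  · intro hy
    refine ⟨overwrite z (k + 1) y, fun i hi => ?_, funext fun i => ?_⟩
    · by_cases h : i < k + 1
      · simp [overwrite, h]
      · simp [overwrite, h, hy i (by omega), setPage]
    · by_cases h : i < k + 1
      · simp [setPage, overwrite, h, hy i (by omega)]
      · simp [setPage, overwrite, h]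

end Cantor

open Cantor

def meagreSys : RelSys :=
  ⟨{s : Set Cantor // IsMeagre s}, {s : Set Cantor // IsMeagre s}, fun s t => s.1 ⊆ t.1⟩

lemma meagreSys_total : ∀ s : meagreSys.Dom, ∃ t, meagreSys.Rel s t :=
  fun s => ⟨s, subset_rfl⟩

lemma meagreSys_unbounded : ∀ t : meagreSys.Cod, ∃ s, ¬ meagreSys.Rel s t := by
  intro t
  obtain ⟨z, hz⟩ := (ne_univ_iff_exists_notMem _).1 fun h => not_isMeagre_univ (h ▸ t.2)
  exact ⟨⟨{z}, isMeagre_singleton z⟩, fun h => hz (h rfl)⟩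

lemma dNum_meagreSys : dNum meagreSys = cofM := by
  unfold dNum cofM
  congr 1
  ext c
  constructor
  · rintro ⟨Y, rfl, hY⟩
    refine ⟨Subtype.val '' Y, ?_, fun s hs => ?_, mk_image_eq Subtype.val_injective⟩
    · rintro _ ⟨s, -, rfl⟩
      exact s.2
    · obtain ⟨t, htY, hst⟩ := hY ⟨s, hs⟩
      exact ⟨t.1, mem_image_of_mem _ htY, hst⟩
  · rintro ⟨F, hFm, hF, rfl⟩
    refine ⟨Subtype.val ⁻¹' F, mk_preimage_of_injective_of_subset_range _ _ Subtype.val_injective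
      fun s hs => ⟨⟨s, hFm s hs⟩, rfl⟩, fun s => ?_⟩
    obtain ⟨t, htF, hst⟩ := hF s.1 s.2
    exact ⟨⟨t, hFm t htF⟩, htF, hst⟩

lemma bNum_meagreSys : bNum meagreSys = addM := by
  unfold bNum addM
  congr 1
  ext c
  constructor
  · rintro ⟨X, rfl, hX⟩
    refine ⟨Subtype.val '' X, ?_, fun hU => ?_, mk_image_eq Subtype.val_injective⟩
    · rintro _ ⟨s, -, rfl⟩
      exact s.2
    · obtain ⟨s, hsX, hs⟩ := hX ⟨_, hU⟩
      exact hs (subset_sUnion_of_mem (mem_image_of_mem _ hsX))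
  · rintro ⟨F, hFm, hF, rfl⟩
    refine ⟨Subtype.val ⁻¹' F, mk_preimage_of_injective_of_subset_range _ _ Subtype.val_injective
      fun s hs => ⟨⟨s, hFm s hs⟩, rfl⟩, fun t => ?_⟩
    by_contra! h
    exact hF (t.2.mono (sUnion_subset fun s hs => h ⟨s, hFm s hs⟩ hs))

lemma aleph0_le_cofM : ℵ₀ ≤ cofM := by
  obtain ⟨Y, hYc, hY⟩ := exists_mk_eq_dNum meagreSys_total
  rw [← dNum_meagreSys, ← hYc, aleph0_le_mk_iff, infinite_coe_iff]
  intro hfin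
  have hu : IsMeagre (⋃ y ∈ Y, y.1) := isMeagre_biUnion hfin.countable fun y _ => y.2
  obtain ⟨z, hz⟩ := (ne_univ_iff_exists_notMem _).1 fun h => not_isMeagre_univ (h ▸ hu)
  obtain ⟨y, hyY, hy⟩ := hY ⟨_, hu.union (isMeagre_singleton z)⟩
  exact hz (mem_biUnion hyY (hy (mem_union_right _ rfl)))

section QuotientAlgebra

variable {α : Type} [BooleanAlgebra α] (I : Ideal (AsBoolRing α))

lemma quotCls_inf (a b : α) : quotCls I (a ⊓ b) = quotCls I a ⊓ quotCls I b :=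
  show toBoolAlg (Ideal.Quotient.mk I (toBoolRing a * toBoolRing b)) =
    (toBoolAlg (Ideal.Quotient.mk I (toBoolRing a)) : AsBoolAlg (AsBoolRing α ⧸ I)) ⊓
      toBoolAlg (Ideal.Quotient.mk I (toBoolRing b)) by rw [map_mul, toBoolAlg_mul]

lemma quotCls_eq_iff (a b : α) : quotCls I a = quotCls I b ↔ toBoolRing (a ∆ b) ∈ I := by
  show toBoolAlg (Ideal.Quotient.mk I (toBoolRing a)) =
    (toBoolAlg (Ideal.Quotient.mk I (toBoolRing b)) : AsBoolAlg (AsBoolRing α ⧸ I)) ↔ _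
  rw [toBoolAlg.injective.eq_iff, Ideal.Quotient.mk_eq_mk_iff_sub_mem, BooleanRing.sub_eq_add,
    toBoolRing_symmDiff]

lemma quotCls_bot : quotCls I (⊥ : α) = ⊥ :=
  show toBoolAlg (Ideal.Quotient.mk I 0) = (⊥ : AsBoolAlg (AsBoolRing α ⧸ I)) by
    rw [map_zero, toBoolAlg_zero]

lemma quotCls_surjective : Function.Surjective (quotCls I) := fun b => by
  obtain ⟨x, hx⟩ := Ideal.Quotient.mk_surjective (ofBoolAlg (α := AsBoolRing α ⧸ I) b)
  exact ⟨ofBoolRing x, by unfold quotCls; simp [hx]; rfl⟩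

end QuotientAlgebra

lemma cohenCls_eq_iff (X Y : BorelSets) :
    cohenCls X = cohenCls Y ↔ IsMeagre ((X : Set Cantor) ∆ Y) :=
  quotCls_eq_iff _ _ _

lemma cohenCls_inf (X Y : BorelSets) : cohenCls (X ⊓ Y) = cohenCls X ⊓ cohenCls Y :=
  quotCls_inf _ _ _

lemma cohenCls_eq_bot_iff (X : BorelSets) : cohenCls X = ⊥ ↔ IsMeagre (X : Set Cantor) := by
  rw [show (⊥ : CohenAlg) = cohenCls ⊥ from (quotCls_bot meagreIdeal).symm, cohenCls_eq_iff]
  show IsMeagre ((X : Set Cantor) ∆ ∅) ↔ _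
  rw [← bot_eq_empty, symmDiff_bot]

lemma cohenCls_le_iff (X Y : BorelSets) :
    cohenCls X ≤ cohenCls Y ↔ IsMeagre ((X : Set Cantor) \ Y) := by
  rw [← inf_eq_left, ← cohenCls_inf, cohenCls_eq_iff]
  show IsMeagre (((X : Set Cantor) ∩ Y) ∆ X) ↔ _
  rw [symmDiff_comm, symmDiff_of_ge inter_subset_left, sdiff_self_inter]

lemma cohenCls_mono {X Y : BorelSets} (h : (X : Set Cantor) ⊆ Y) : cohenCls X ≤ cohenCls Y :=
  (cohenCls_le_iff X Y).2 (sdiff_eq_empty.2 h ▸ IsMeagre.empty)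

lemma cohenCls_eq_bot_iff_of_isOpen {U : Set Cantor} (hU : IsOpen U) :
    cohenCls ⟨U, hU.measurableSet⟩ = ⊥ ↔ U = ∅ := by
  rw [cohenCls_eq_bot_iff]
  exact ⟨hU.eq_empty_of_isMeagre, fun h => h ▸ IsMeagre.empty⟩

lemma subset_of_cohenCls_le {U T : Set Cantor} (hU : IsOpen U) (hT : IsClosed T)
    (h : cohenCls ⟨U, hU.measurableSet⟩ ≤ cohenCls ⟨T, hT.measurableSet⟩) : U ⊆ T :=
  sdiff_eq_empty.1 ((hU.sdiff hT).eq_empty_of_isMeagre ((cohenCls_le_iff _ _).1 h))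

lemma exists_isOpen_cohenCls_eq (b : CohenAlg) :
    ∃ U : Set Cantor, ∃ hU : IsOpen U, cohenCls ⟨U, hU.measurableSet⟩ = b := by
  obtain ⟨B, rfl⟩ := quotCls_surjective meagreIdeal b
  obtain ⟨U, hU, hBU⟩ := B.2.residualEq_isOpen
  refine ⟨U, hU, (cohenCls_eq_iff _ _).2 ?_⟩
  refine (eventuallyEq_set.1 hBU).mono fun z hz hzU => ?_
  rcases hzU with ⟨h1, h2⟩ | ⟨h1, h2⟩ <;> tauto

lemma MaxAC.exists_isOpen_rep {C : Set CohenAlg} (hC : MaxAC C) :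
    ∃ (U : C → Set Cantor) (hU : ∀ c, IsOpen (U c)),
      (∀ c, cohenCls ⟨U c, (hU c).measurableSet⟩ = c) ∧ Dense (⋃ c, U c) := by
  choose U hU hUc using fun c : C => exists_isOpen_cohenCls_eq c
  refine ⟨U, hU, hUc, dense_iff_inter_open.2 fun V hV hVne => ?_⟩
  by_contra hdisj
  obtain ⟨c, hcC, hc⟩ := hC.2 (cohenCls ⟨V, hV.measurableSet⟩)
    ((cohenCls_eq_bot_iff_of_isOpen hV).not.2 hVne.ne_empty)
  apply hc
  rw [← show cohenCls ⟨U ⟨c, hcC⟩, (hU _).measurableSet⟩ = c from hUc ⟨c, hcC⟩, ← cohenCls_inf,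
    cohenCls_eq_bot_iff]
  exact IsMeagre.empty.mono fun z hz => hdisj ⟨z, hz.2, mem_iUnion.2 ⟨_, hz.1⟩⟩

lemma Refines.almostRefines {α : Type} [BooleanAlgebra α] {A C : Set α} (h : Refines A C) :
    AlmostRefines A C :=
  ⟨∅, by simp, fun c hc => let ⟨a, ha, hca⟩ := h c hc; ⟨a, Or.inl ⟨ha, by simp⟩, hca⟩⟩

lemma partStar_total {α : Type} [BooleanAlgebra α] :
    ∀ A : (PartStar α).Dom, ∃ C, (PartStar α).Rel A C :=
  fun A => ⟨A, Refines.almostRefines fun c hc => ⟨c, hc, le_rfl⟩⟩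

noncomputable def cylClass (w : Cantor) (L : ℕ) : CohenAlg :=
  cohenCls ⟨cylinder w L, (isOpen_cylinder _ w L).measurableSet⟩

lemma cylClass_eq_of_mem_cylinder {z w : Cantor} {L : ℕ} (h : z ∈ cylinder w L) :
    cylClass z L = cylClass w L := by
  simp only [cylClass, mem_cylinder_iff_eq.1 h]

def cylAntichain (P : Cantor → ℕ → Prop) (ℓ : ℕ → ℕ) : Set CohenAlg :=
  {a | ∃ w n, P w n ∧ a = cylClass w (ℓ n)}

lemma maxAC_cylAntichain {P : Cantor → ℕ → Prop} {ℓ : ℕ → ℕ}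
    (hP : ∀ w n w' n', P w n → P w' n' → (cylinder w (ℓ n) ∩ cylinder w' (ℓ n')).Nonempty → n = n')
    (hdense : ∀ U : Set Cantor, IsOpen U → U.Nonempty → ∃ w ∈ U, ∃ n, P w n) :
    MaxAC (cylAntichain P ℓ) := by
  refine ⟨⟨?_, ?_⟩, fun b hb => ?_⟩
  · rintro _ ⟨w, n, -, rfl⟩
    rw [cylClass, Ne, cohenCls_eq_bot_iff_of_isOpen (isOpen_cylinder _ w _)]
    exact (nonempty_of_mem (self_mem_cylinder w _)).ne_empty
  · rintro _ ⟨w, n, hw, rfl⟩ _ ⟨w', n', hw', rfl⟩ hne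
    by_cases h : (cylinder w (ℓ n) ∩ cylinder w' (ℓ n')).Nonempty
    · obtain rfl := hP w n w' n' hw hw' h
      obtain ⟨z, hz, hz'⟩ := h
      exact absurd ((cylClass_eq_of_mem_cylinder hz).symm.trans (cylClass_eq_of_mem_cylinder hz'))
        hne
    · rw [cylClass, cylClass, ← cohenCls_inf, cohenCls_eq_bot_iff]
      show IsMeagre (cylinder w (ℓ n) ∩ cylinder w' (ℓ n'))
      rw [not_nonempty_iff_eq_empty.1 h]
      exact IsMeagre.empty
  · obtain ⟨U, hU, rfl⟩ := exists_isOpen_cohenCls_eq b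
    obtain ⟨w, hwU, n, hw⟩ :=
      hdense U hU (nonempty_iff_ne_empty.2 ((cohenCls_eq_bot_iff_of_isOpen hU).not.1 hb))
    refine ⟨cylClass w (ℓ n), ⟨w, n, hw, rfl⟩, ?_⟩
    rw [cylClass, ← cohenCls_inf, Ne, cohenCls_eq_bot_iff]
    exact not_isMeagre_of_isOpen ((isOpen_cylinder _ w _).inter hU) ⟨w, self_mem_cylinder w _, hwU⟩

lemma exists_isClosed_le_of_mem {P : Cantor → ℕ → Prop} {ℓ : ℕ → ℕ} {F : Finset CohenAlg}
    (hF : ↑F ⊆ cylAntichain P ℓ) {a : CohenAlg} (ha : a ∈ (cylAntichain P ℓ \ ↑F) ∪ {F.sup id}) :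
    ∃ (T : Set Cantor) (hT : IsClosed T), T ⊆ {z | ∃ w n, P w n ∧ z ∈ cylinder w (ℓ n)} ∧
      a ≤ cohenCls ⟨T, hT.measurableSet⟩ := by
  classical
  rcases ha with ⟨⟨w, n, hw, rfl⟩, -⟩ | rfl
  · exact ⟨_, isClosed_cylinder w (ℓ n), fun z hz => ⟨w, n, hw, hz⟩, le_rfl⟩
  · choose! w n hw hwa using fun a (ha : a ∈ F) => hF ha
    refine ⟨⋃ a ∈ F, cylinder (w a) (ℓ (n a)),
      isClosed_biUnion_finset fun a _ => isClosed_cylinder _ _, ?_, Finset.sup_le fun a ha => ?_⟩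
    · simp only [iUnion_subset_iff]
      exact fun a ha z hz => ⟨w a, n a, hw a ha, hz⟩
    · rw [id, hwa a ha, cylClass]
      exact cohenCls_mono (subset_biUnion_of_mem (u := fun a => cylinder (w a) (ℓ (n a))) ha)

def blockAntichain (m : ℕ → ℕ) (x : Cantor) (k : ℕ) : Set CohenAlg :=
  cylAntichain (IsFirstMatch m x k) fun n => m (n + 1)

def pagedAntichain (m : ℕ → ℕ) (x : Cantor) : Set CohenAlg :=
  cylAntichain (fun w n => ∃ k, w ∈ page k ∧ IsFirstMatch m x (k + 1) w n) fun n => m (n + 1)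

lemma maxAC_blockAntichain {m : ℕ → ℕ} (hm : StrictMono m) (x : Cantor) (k : ℕ) :
    MaxAC (blockAntichain m x k) :=
  maxAC_cylAntichain (fun _ _ _ _ h h' => h.eq_of_nonempty hm.monotone h') fun U hU ⟨z, hz⟩ => by
    obtain ⟨N, hN⟩ := exists_cylinder_subset hU hz
    obtain ⟨w, hw, hfm⟩ := exists_isFirstMatch_mem_cylinder hm x z N k
    exact ⟨w, hN hw, hfm⟩

lemma maxAC_pagedAntichain {m : ℕ → ℕ} (hm : StrictMono m) (x : Cantor) :
    MaxAC (pagedAntichain m x) := by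
  refine maxAC_cylAntichain (fun w n w' n' ⟨k, hwk, h⟩ ⟨k', hwk', h'⟩ hne => ?_) fun U hU hne => ?_
  · obtain ⟨z, hz, hz'⟩ := hne
    have hk : k < m (n + 1) := by
      have := h.1; have := hm.le_apply (x := n); have := hm (Nat.lt_add_one n); omega
    have hk' : k' < m (n' + 1) := by
      have := h'.1; have := hm.le_apply (x := n'); have := hm (Nat.lt_add_one n'); omega
    obtain rfl : k = k' := eq_of_mem_page hwk hwk' <| by
      rw [← hz _ ((min_le_left k k').trans_lt hk), ← hz' _ ((min_le_right k k').trans_lt hk')]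
    exact h.eq_of_nonempty hm.monotone h' ⟨z, hz, hz'⟩
  · obtain ⟨z, hzU, hz⟩ : ∃ z ∈ U, z ≠ fun _ => true := by
      by_contra! h
      exact not_isMeagre_of_isOpen hU hne ((isMeagre_singleton _).mono h)
    obtain ⟨k, hzk⟩ := exists_mem_page hz
    obtain ⟨N, hN⟩ := exists_cylinder_subset hU hzU
    obtain ⟨w, hw, n, hfm⟩ := exists_isFirstMatch_mem_cylinder hm x z (max N (k + 1)) (k + 1)
    refine ⟨w, hN (cylinder_anti z (le_max_left _ _) hw), n, k, fun i hi => ?_, hfm⟩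
    exact (hw i (hi.trans_le (le_max_right _ _))).trans (hzk i hi)

lemma exists_isMeagre_matchMeagre_subset {C : Set CohenAlg} (hC : MaxAC C) :
    ∃ S : Set Cantor, IsMeagre S ∧ ∀ (m : ℕ → ℕ) (x : Cantor), StrictMono m →
      AlmostRefines (pagedAntichain m x) C → matchMeagre m x ⊆ S := by
  obtain ⟨U, hU, hUC, hdense⟩ := hC.exists_isOpen_rep
  have hmeagre : IsMeagre (⋃ c, U c)ᶜ := by
    rw [IsMeagre, compl_compl]
    exact residual_of_dense_open (isOpen_iUnion hU) hdense
  refine ⟨⋃ k, setPage k ⁻¹' (⋃ c, U c)ᶜ, isMeagre_iUnion fun k =>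
    hmeagre.preimage_of_isOpenMap (continuous_setPage k) (isOpenMap_setPage k), ?_⟩
  -- a cylinder of `pagedAntichain m x` through a point of page `K` ends with a match at a block
  -- `> K`, which `z` shares with `setPage K z`
  rintro m x hm ⟨F, hFP, hF⟩ z hz
  obtain ⟨K, hK⟩ := eventually_atTop.1 hz
  by_contra hzS
  have hzK : setPage K z ∈ ⋃ c, U c := by_contra fun h => hzS (mem_iUnion_of_mem K h)
  obtain ⟨c, hc⟩ := mem_iUnion.1 hzK
  obtain ⟨a, ha, hca⟩ := hF c c.2
  obtain ⟨T, hT, hTP, haT⟩ := exists_isClosed_le_of_mem hFP ha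
  obtain ⟨w, n, ⟨k, hwk, hfm⟩, hzw⟩ :=
    hTP (subset_of_cohenCls_le (hU c) hT ((hUC c).symm ▸ hca.trans haT) hc)
  have hn : k < n ∧ n ≤ m n := ⟨hfm.1, hm.le_apply⟩
  obtain rfl : k = K := eq_of_mem_page hwk (setPage_mem_page K z) <|
    (hzw _ ((min_le_left k K).trans_lt (by have := hm (Nat.lt_add_one n); omega))).symm
  refine hK n (by omega) fun i h1 h2 => ?_
  rw [← setPage_apply_of_lt (k := k) (i := i) (by omega) z, hzw i h2]
  exact hfm.2.1 i h1 h2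

lemma exists_refines_blockAntichain {A : Set CohenAlg} (hA : MaxAC A) :
    ∃ (mJ : ℕ → ℕ) (y : Cantor), StrictMono mJ ∧ ∀ (mI : ℕ → ℕ) (x : Cantor), StrictMono mI →
      matchMeagre mJ y ⊆ matchMeagre mI x → ∃ N, Refines A (blockAntichain mI x N) := by
  obtain ⟨U, hU, hUA, hdense⟩ := hA.exists_isOpen_rep
  obtain ⟨mJ, y, hJ, hcap⟩ :=
    exists_pattern_capturing (U := fun _ => U) (fun _ => hU) fun _ => hdense
  refine ⟨mJ, y, hJ, fun mI x hI hsub => ?_⟩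
  obtain ⟨N, hN⟩ := eventually_atTop.1 (eventually_engulf hI hJ hsub)
  refine ⟨N, ?_⟩
  rintro _ ⟨w, n, hfm, rfl⟩
  obtain ⟨j, hj1, hj2, hxy⟩ := hN n hfm.1
  obtain ⟨c, hc⟩ := hcap j w fun i h1 h2 =>
    (hfm.2.1 i (hj1.trans h1) (h2.trans_le hj2)).trans (hxy i h1 h2)
  exact ⟨c, c.2, hUA c ▸ cohenCls_mono ((cylinder_anti w hj2).trans hc)⟩

lemma galoisTukey_meagreSys_partStar : GT meagreSys (PartStar CohenAlg) := by
  choose m x hm hM using fun s : meagreSys.Dom => exists_subset_matchMeagre s.2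
  choose S hS hCS using fun C : PartT CohenAlg => exists_isMeagre_matchMeagre_subset C.2
  exact ⟨fun s => ⟨pagedAntichain (m s) (x s), maxAC_pagedAntichain (hm s) _⟩,
    fun C => ⟨S C, hS C⟩, fun s C h => (hM s).trans (hCS C _ _ (hm s) h)⟩

lemma galoisTukey_meagreSys_sigmaSys : GT meagreSys (sigmaSys (PartStar CohenAlg)) := by
  choose m x hm hM using fun s : meagreSys.Dom => exists_subset_matchMeagre s.2
  choose S hS hCS using fun C : PartT CohenAlg => exists_isMeagre_matchMeagre_subset C.2
  exact ⟨fun s => ⟨pagedAntichain (m s) (x s), maxAC_pagedAntichain (hm s) _⟩,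
    fun f => ⟨⋃ n, S (f n), isMeagre_iUnion fun n => hS (f n)⟩,
    fun s f ⟨n, h⟩ => show s.1 ⊆ ⋃ n, S (f n) from
      (hM s).trans ((hCS (f n) _ _ (hm s) h).trans (subset_iUnion (fun n => S (f n)) n))⟩

lemma galoisTukey_sigmaSys_meagreSys : GT (sigmaSys (PartStar CohenAlg)) meagreSys := by
  choose m x hm hM using fun s : meagreSys.Dom => exists_subset_matchMeagre s.2
  choose mJ y hJ hA using fun A : PartT CohenAlg => exists_refines_blockAntichain A.2
  exact ⟨fun A => ⟨matchMeagre (mJ A) (y A), isMeagre_matchMeagre (hJ A) _⟩,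
    fun s k => ⟨blockAntichain (m s) (x s) k, maxAC_blockAntichain (hm s) _ _⟩,
    fun A s h => (hA A _ _ (hm s) (h.trans (hM s))).imp fun _ hN => hN.almostRefines⟩

/-- `𝔡(Part*(ℂ_ω)) = cof(ℳ)` and `𝔟((Part*(ℂ_ω))^σ) = add(ℳ)`. -/
theorem stmt14 :
    dNum (PartStar CohenAlg) = cofM ∧ bNum (sigmaSys (PartStar CohenAlg)) = addM := by
  rw [← dNum_meagreSys, ← bNum_meagreSys]
  refine ⟨le_antisymm ?_ (galoisTukey_meagreSys_partStar.dNum_le partStar_total),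
    le_antisymm (galoisTukey_meagreSys_sigmaSys.bNum_le meagreSys_unbounded) ?_⟩
  · calc dNum (PartStar CohenAlg)
        ≤ dNum (sigmaSys (PartStar CohenAlg)) * ℵ₀ :=
          dNum_le_dNum_sigmaSys_mul_aleph0 partStar_total
      _ ≤ dNum meagreSys * ℵ₀ := by
        gcongr
        exact galoisTukey_sigmaSys_meagreSys.dNum_le meagreSys_total
      _ = dNum meagreSys := mul_aleph0_eq (dNum_meagreSys ▸ aleph0_le_cofM)
  · exact galoisTukey_sigmaSys_meagreSys.bNum_le
      (galoisTukey_meagreSys_sigmaSys.unbounded meagreSys_unbounded)
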